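/- If (u_A, w_A) is optimal for the dual LP of the learning-from-demonstrations problem, then any apprentice policy π_A (optimal for the minimax LfD problem) is optimal for the forward RL problem with cost c_{w_A}, and u_A = V*_{w_A} (ν₀-almost surely). -/

import Mathlib

open Finset

variable {X A : Type*} [Fintype X] [Fintype A] [DecidableEq X] [DecidableEq A]
  [Nonempty X] [Nonempty A]

/-- A finite discounted Markov decision process. -/
structure FinMDP (X A : Type*) [Fintype X] [Fintype A] where
  P : X → A → X → ℝ
  P_nonneg : ∀ x a x', 0 ≤ P x a x'
  P_sum : ∀ x a, ∑ x', P x a x' = 1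
  ν : X → ℝ
  ν_nonneg : ∀ x, 0 ≤ ν x
  ν_sum : ∑ x, ν x = 1
  γ : ℝ
  γ_pos : 0 < γ
  γ_lt_one : γ < 1

/-- A stationary Markov policy. -/
def FinMDP.IsPolicy (π : X → A → ℝ) : Prop :=
  (∀ x a, 0 ≤ π x a) ∧ ∀ x, ∑ a, π x a = 1

namespace FinMDP

variable (M : FinMDP X A)

/-- The state-action distribution at time `t` of policy `π` started from `ν'`. -/
noncomputable def saDist (ν' : X → ℝ) (π : X → A → ℝ) : ℕ → X × A → ℝ
  | 0 => fun p => ν' p.1 * π p.1 p.2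
  | t + 1 => fun p => (∑ q : X × A, saDist ν' π t q * M.P q.1 q.2 p.1) * π p.1 p.2

/-- The normalized discounted occupancy measure of `π` started from `ν'`. -/
noncomputable def occFrom (ν' : X → ℝ) (π : X → A → ℝ) (p : X × A) : ℝ :=
  (1 - M.γ) * ∑' t : ℕ, M.γ ^ t * M.saDist ν' π t p

/-- The normalized discounted occupancy measure of `π` (from the initial distribution). -/
noncomputable def occ (π : X → A → ℝ) : X × A → ℝ :=
  M.occFrom M.ν π

/-- The (normalized) value function of policy `π` for cost `c`. -/
noncomputable def value (c : X × A → ℝ) (π : X → A → ℝ) (x : X) : ℝ :=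
  ∑ p : X × A, M.occFrom (fun y => if y = x then 1 else 0) π p * c p

/-- The total expected (normalized) discounted cost `ρ_c(π) = ⟨μ_π, c⟩`. -/
noncomputable def cost (c : X × A → ℝ) (π : X → A → ℝ) : ℝ :=
  ∑ p : X × A, M.occ π p * c p

/-- The Bellman flow operator `T_γ μ = (1/(1-γ)) (B - γ P)ᵀ μ`. -/
noncomputable def Tflow (μ : X × A → ℝ) (x' : X) : ℝ :=
  (1 / (1 - M.γ)) * ((∑ a, μ (x', a)) - M.γ * ∑ p : X × A, μ p * M.P p.1 p.2 x')

/-- The adjoint operator `T*_γ u = (1/(1-γ)) (B - γ P) u`. -/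
noncomputable def Tadj (u : X → ℝ) (p : X × A) : ℝ :=
  (1 / (1 - M.γ)) * (u p.1 - M.γ * ∑ x', M.P p.1 p.2 x' * u x')

/-- `π` is an optimal policy for the forward RL problem with cost `c`. -/
def IsOptimal (c : X × A → ℝ) (π : X → A → ℝ) : Prop :=
  IsPolicy π ∧ ∀ π', IsPolicy π' → M.cost c π ≤ M.cost c π'

/-- The optimal value function `V*_c(x) = min_π V_c^π(x)`. -/
noncomputable def Vstar (c : X × A → ℝ) (x : X) : ℝ :=
  sInf {v | ∃ π, IsPolicy π ∧ v = M.value c π x}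

end FinMDP

/-- The policy induced by a state-action distribution:
`π_μ(a|x) = μ(x,a) / ∑_{a'} μ(x,a')` (uniform on zero-mass states). -/
noncomputable def inducedPolicy (μ : X × A → ℝ) (x : X) (a : A) : ℝ :=
  if (∑ a' : A, μ (x, a')) = 0 then (1 : ℝ) / (Fintype.card A)
  else μ (x, a) / ∑ a' : A, μ (x, a')

/-- `μ` is a probability distribution on state-action pairs. -/
def IsDist (μ : X × A → ℝ) : Prop := (∀ p, 0 ≤ μ p) ∧ ∑ p : X × A, μ p = 1

/-- Membership in the probability simplex `Δ_{[n]}`. -/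
def simplexPt {n : ℕ} (w : Fin n → ℝ) : Prop := (∀ i, 0 ≤ w i) ∧ ∑ i, w i = 1

/-- The `ℓ¹` norm of a finitely supported vector. -/
noncomputable def l1 {ι : Type*} [Fintype ι] (f : ι → ℝ) : ℝ := ∑ i, |f i|

/-- The `ℓ∞` norm of a finitely supported vector. -/
noncomputable def linf {ι : Type*} [Fintype ι] [Nonempty ι] (f : ι → ℝ) : ℝ :=
  Finset.univ.sup' Finset.univ_nonempty fun i => |f i|

/-- The cost `c_w = ∑ᵢ wᵢ cᵢ` parameterized by weights `w`. -/
noncomputable def costW {nc : ℕ} (c : Fin nc → X × A → ℝ) (w : Fin nc → ℝ) :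
    X × A → ℝ :=
  fun p => ∑ i, w i * c i p

/-- The objective of the dual LP `(D_{π_E})`. -/
noncomputable def dualObj {nc : ℕ} (M : FinMDP X A) (c : Fin nc → X × A → ℝ)
    (πE : X → A → ℝ) (u : X → ℝ) (w : Fin nc → ℝ) : ℝ :=
  ∑ p : X × A, M.occ πE p * (M.Tadj u p - costW c w p)

/-- Feasibility for the dual LP `(D_{π_E})`. -/
def dualFeasible {nc : ℕ} (M : FinMDP X A) (c : Fin nc → X × A → ℝ)
    (u : X → ℝ) (w : Fin nc → ℝ) : Prop :=
  simplexPt w ∧ ∀ p, 0 ≤ costW c w p - M.Tadj u p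

/-- Optimality for the dual LP `(D_{π_E})`. -/
def dualOptimal {nc : ℕ} (M : FinMDP X A) (c : Fin nc → X × A → ℝ)
    (πE : X → A → ℝ) (u : X → ℝ) (w : Fin nc → ℝ) : Prop :=
  dualFeasible M c u w ∧
    ∀ u' w', dualFeasible M c u' w' → dualObj M c πE u' w' ≤ dualObj M c πE u w

/-- The `C`-distance `δ_C(π, π_E) = max_i (ρ_{c_i}(π) - ρ_{c_i}(π_E))`. -/
noncomputable def gapMax {nc : ℕ} [NeZero nc] (M : FinMDP X A)
    (c : Fin nc → X × A → ℝ) (πE π : X → A → ℝ) : ℝ :=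
  haveI : Nonempty (Fin nc) := ⟨⟨0, Nat.pos_of_ne_zero (NeZero.ne nc)⟩⟩
  Finset.univ.sup' Finset.univ_nonempty fun i => M.cost (c i) π - M.cost (c i) πE

/-- `π_A` is an apprentice policy: it minimizes `δ_C(·, π_E)` over stationary policies. -/
def IsApprentice {nc : ℕ} [NeZero nc] (M : FinMDP X A)
    (c : Fin nc → X × A → ℝ) (πE πA : X → A → ℝ) : Prop :=
  FinMDP.IsPolicy πA ∧
    ∀ π, FinMDP.IsPolicy π → gapMax M c πE πA ≤ gapMax M c πE π

/-- The parameter set `Λ = {λ : ‖λ‖₂ ≤ β/√n_u}`. -/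
def lamSet (nu : ℕ) (β : ℝ) : Set (Fin nu → ℝ) :=
  {l | Real.sqrt (∑ k, l k ^ 2) ≤ β / Real.sqrt nu}

/-- The reduced Lagrangian `L_r(θ, λ, w) = ⟨μ_θ - μ_{π_E}, c_w - T*_γ u_λ⟩`. -/
noncomputable def Lr {nm nu nc : ℕ} (M : FinMDP X A)
    (Φ : Fin nm → X × A → ℝ) (Ψ : Fin nu → X → ℝ) (c : Fin nc → X × A → ℝ)
    (πE : X → A → ℝ) (θ : Fin nm → ℝ) (lam : Fin nu → ℝ) (w : Fin nc → ℝ) : ℝ :=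
  ∑ p : X × A, ((∑ i, θ i * Φ i p) - M.occ πE p) *
    ((∑ j, w j * c j p) - M.Tadj (fun x => ∑ k, lam k * Ψ k x) p)

/-- The saddle-point residual of a point `(θ, λ, w)` for the reduced Lagrangian. -/
noncomputable def epsSad {nm nu nc : ℕ} (M : FinMDP X A)
    (Φ : Fin nm → X × A → ℝ) (Ψ : Fin nu → X → ℝ) (c : Fin nc → X × A → ℝ)
    (πE : X → A → ℝ) (β : ℝ)
    (θ : Fin nm → ℝ) (lam : Fin nu → ℝ) (w : Fin nc → ℝ) : ℝ :=
  sSup {v | ∃ lam' ∈ lamSet nu β, ∃ w', simplexPt w' ∧ v = Lr M Φ Ψ c πE θ lam' w'} -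
    sInf {v | ∃ θ', simplexPt θ' ∧ v = Lr M Φ Ψ c πE θ' lam w}

/-!
Everything rests on the adjoint identity `⟨μ, T*_γ u⟩ = ⟨T_γ μ, u⟩` together with the flow
equation `T_γ μ = ν` satisfied by the occupancy measure of any policy started from `ν`. Pairing a
dual constraint `T*_γ u ≤ c` with occupancy measures gives `u ≤ V_c^π` pointwise and
`⟨ν₀, u⟩ ≤ ρ_c(π)` (weak duality), with equality for a policy supported where the constraint is
tight, such as a greedy policy for the fixed point `V*_c` of the Bellman optimality operator.

Conversely, every point of the flow polytope `{μ ≥ 0 | T_γ μ = ν₀}` is the occupancy measure of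
the policy it induces, so `min_π δ_C(π, π_E)` is the value of a bilinear game between the flow
polytope and the simplex of weights. Sion's minimax theorem yields weights `w` with
`δ_C(π_A, π_E) ≤ ρ_{c_w}(π) - ρ_{c_w}(π_E)` for all `π`; at the greedy policy for `c_w` the
right-hand side is the dual objective at the feasible point `(V*_{c_w}, w)`, hence at most the
dual optimum, which by weak duality at `(u_A, w_A)` is at most
`ρ_{c_{w_A}}(π) - ρ_{c_{w_A}}(π_E)` for every `π`. As `ρ_{c_{w_A}}(π_A) - ρ_{c_{w_A}}(π_E)` is a
convex combination of the gaps, it is at most `δ_C(π_A, π_E)`, so `π_A` is optimal for `c_{w_A}`.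
Finally `u_A ≤ V*_{c_{w_A}}`, while dual optimality gives `⟨ν₀, V*_{c_{w_A}}⟩ ≤ ⟨ν₀, u_A⟩`;
as `ν₀ > 0` the two agree.
-/

open scoped Matrix

section

omit [DecidableEq X] [DecidableEq A] [Nonempty X] [Nonempty A]

theorem eq_zero_of_eq_smul_vecMul {ι : Type*} [Fintype ι] [DecidableEq ι] {Q : Matrix ι ι ℝ}
    (hQ : Q ∈ Matrix.rowStochastic ℝ ι) {γ : ℝ} (hγ : |γ| < 1) {e : ι → ℝ}
    (he : e = γ • (e ᵥ* Q)) : e = 0 := by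
  have h : ∑ i, |e i| ≤ |γ| * ∑ i, |e i| :=
    calc ∑ j, |e j| = ∑ j, |γ| * |∑ i, e i * Q i j| := by
          conv_lhs => rw [he]
          simp [Matrix.vecMul, dotProduct, abs_mul]
      _ ≤ ∑ j, |γ| * ∑ i, |e i| * Q i j := by
          gcongr with j
          refine (abs_sum_le_sum_abs _ _).trans_eq (sum_congr rfl fun i _ => ?_)
          rw [abs_mul, abs_of_nonneg (Matrix.nonneg_of_mem_rowStochastic hQ)]
      _ = |γ| * ∑ i, |e i| := by
          rw [← mul_sum, sum_comm]
          simp [← mul_sum, Matrix.sum_row_of_mem_rowStochastic hQ]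
  have h0 : ∑ i, |e i| = 0 := by
    nlinarith [abs_nonneg γ, sum_nonneg fun i (_ : i ∈ univ) => abs_nonneg (e i)]
  funext i
  exact abs_eq_zero.1 ((sum_eq_zero_iff_of_nonneg fun i _ => abs_nonneg (e i)).1 h0 i (mem_univ i))

theorem quasilinearOn_of_map_add_smul {E : Type*} [AddCommGroup E] [Module ℝ E] {s : Set E}
    (hs : Convex ℝ s) {f : E → ℝ}
    (hf : ∀ x y (a b : ℝ), a + b = 1 → f (a • x + b • y) = a * f x + b * f y) :
    QuasilinearOn ℝ s f :=
  ⟨ConvexOn.quasiconvexOn ⟨hs, fun x _ y _ a b _ _ hab => (hf x y a b hab).le⟩,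
    ConcaveOn.quasiconcaveOn ⟨hs, fun x _ y _ a b _ _ hab => (hf x y a b hab).ge⟩⟩

omit [Fintype X] in
theorem inducedPolicy_isPolicy [Nonempty A] {μ : X × A → ℝ} (hμ : 0 ≤ μ) :
    FinMDP.IsPolicy (inducedPolicy μ) := by
  refine ⟨fun x a => ?_, fun x => ?_⟩
  · unfold inducedPolicy
    split_ifs
    · positivity
    · exact div_nonneg (hμ _) (sum_nonneg fun b _ => hμ _)
  · unfold inducedPolicy
    split_ifs with h
    · simp [Fintype.card_ne_zero]
    · rw [← sum_div, div_self h]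

omit [Fintype X] in
theorem sum_mul_inducedPolicy {μ : X × A → ℝ} (hμ : 0 ≤ μ) (x : X) (a : A) :
    (∑ b, μ (x, b)) * inducedPolicy μ x a = μ (x, a) := by
  unfold inducedPolicy
  split_ifs with h
  · rw [h, zero_mul, (sum_eq_zero_iff_of_nonneg fun b _ => hμ (x, b)).1 h a (mem_univ a)]
  · exact mul_div_cancel₀ _ h

namespace FinMDP

variable (M : FinMDP X A) {ν' : X → ℝ} {π : X → A → ℝ}

theorem saDist_nonneg (hν' : 0 ≤ ν') (hπ : ∀ x a, 0 ≤ π x a) (t : ℕ) (p : X × A) :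
    0 ≤ M.saDist ν' π t p := by
  induction t generalizing p with
  | zero => exact mul_nonneg (hν' _) (hπ _ _)
  | succ t ih =>
    exact mul_nonneg (sum_nonneg fun q _ => mul_nonneg (ih q) (M.P_nonneg _ _ _)) (hπ _ _)

theorem sum_saDist_zero (hπ : ∀ x, ∑ a, π x a = 1) (x : X) :
    ∑ a, M.saDist ν' π 0 (x, a) = ν' x := by
  simp [saDist, ← mul_sum, hπ]

theorem sum_saDist_succ (hπ : ∀ x, ∑ a, π x a = 1) (t : ℕ) (x : X) :
    ∑ a, M.saDist ν' π (t + 1) (x, a) = ∑ q : X × A, M.saDist ν' π t q * M.P q.1 q.2 x := by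
  simp [saDist, ← mul_sum, hπ]

theorem sum_saDist (hπ : ∀ x, ∑ a, π x a = 1) (t : ℕ) :
    ∑ p : X × A, M.saDist ν' π t p = ∑ x, ν' x := by
  induction t with
  | zero => simp_rw [Fintype.sum_prod_type, M.sum_saDist_zero hπ]
  | succ t ih =>
    simp_rw [Fintype.sum_prod_type (f := M.saDist ν' π (t + 1)), M.sum_saDist_succ hπ]
    rw [sum_comm]
    simpa [← mul_sum, M.P_sum] using ih

theorem hasSum_occFrom (hν' : 0 ≤ ν') (hπ : IsPolicy π) (p : X × A) :
    HasSum (fun t => (1 - M.γ) * (M.γ ^ t * M.saDist ν' π t p)) (M.occFrom ν' π p) := by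
  have hγ : 0 ≤ M.γ := M.γ_pos.le
  have hsummable : Summable fun t => M.γ ^ t * M.saDist ν' π t p := by
    refine .of_nonneg_of_le (fun t => mul_nonneg (pow_nonneg hγ t) (M.saDist_nonneg hν' hπ.1 t p))
      (fun t => mul_le_mul_of_nonneg_left ?_ (pow_nonneg hγ t))
      ((summable_geometric_of_lt_one hγ M.γ_lt_one).mul_right (∑ x, ν' x))
    rw [← M.sum_saDist hπ.2 t]
    exact single_le_sum (fun q _ => M.saDist_nonneg hν' hπ.1 t q) (mem_univ p)
  exact hsummable.hasSum.mul_left _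

theorem occFrom_nonneg (hν' : 0 ≤ ν') (hπ : ∀ x a, 0 ≤ π x a) (p : X × A) :
    0 ≤ M.occFrom ν' π p :=
  mul_nonneg (sub_nonneg.2 M.γ_lt_one.le) <| tsum_nonneg fun t =>
    mul_nonneg (pow_nonneg M.γ_pos.le t) (M.saDist_nonneg hν' hπ t p)

theorem Tflow_occFrom (hν' : 0 ≤ ν') (hπ : IsPolicy π) : M.Tflow (M.occFrom ν' π) = ν' := by
  funext x
  set m : ℕ → ℝ := fun t => ∑ a, M.saDist ν' π t (x, a)
  have hm : HasSum (fun t => (1 - M.γ) * (M.γ ^ t * m t)) (∑ a, M.occFrom ν' π (x, a)) := by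
    simpa [m, mul_sum] using hasSum_sum fun a _ => M.hasSum_occFrom hν' hπ (x, a)
  have hm_succ : HasSum (fun t => (1 - M.γ) * (M.γ ^ (t + 1) * m (t + 1)))
      (M.γ * ∑ q : X × A, M.occFrom ν' π q * M.P q.1 q.2 x) := by
    refine ((hasSum_sum fun q _ =>
      (M.hasSum_occFrom hν' hπ q).mul_right (M.P q.1 q.2 x)).mul_left M.γ).congr_fun fun t => ?_
    simp only [m, M.sum_saDist_succ hπ.2, mul_sum, pow_succ]
    exact sum_congr rfl fun q _ => by ring
  have hshift := ((hasSum_nat_add_iff' 1).2 hm).unique hm_succ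
  simp only [range_one, sum_singleton, m, M.sum_saDist_zero hπ.2, pow_zero, one_mul] at hshift
  have hγ : 1 - M.γ ≠ 0 := sub_ne_zero.2 M.γ_lt_one.ne'
  unfold Tflow
  field_simp
  linarith

theorem saDist_mul_swap (t : ℕ) (x : X) (a b : A) :
    M.saDist ν' π t (x, a) * π x b = M.saDist ν' π t (x, b) * π x a := by
  cases t <;> simp only [saDist] <;> ring

theorem occFrom_eq_sum_mul (hπ : ∀ x, ∑ a, π x a = 1) (x : X) (a : A) :
    M.occFrom ν' π (x, a) = (∑ b, M.occFrom ν' π (x, b)) * π x a := by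
  have h : ∀ b, M.occFrom ν' π (x, b) * π x a = M.occFrom ν' π (x, a) * π x b := fun b => by
    simp only [occFrom, mul_assoc, ← tsum_mul_right, M.saDist_mul_swap _ x b a]
  rw [sum_mul, sum_congr rfl fun b _ => h b, ← mul_sum, hπ, mul_one]

theorem sum_mul_Tadj (μ : X × A → ℝ) (u : X → ℝ) :
    ∑ p, μ p * M.Tadj u p = ∑ x, M.Tflow μ x * u x := by
  simp only [Tadj, Tflow, mul_sub, sub_mul, sum_sub_distrib, mul_sum, sum_mul,
    Fintype.sum_prod_type]
  congr 1
  · exact sum_congr rfl fun x _ => sum_congr rfl fun a _ => by ring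
  · conv_rhs => rw [sum_comm]; enter [2, y]; rw [sum_comm]
    exact sum_congr rfl fun x _ => sum_congr rfl fun a _ => sum_congr rfl fun y _ => by ring

theorem sum_occFrom_mul_Tadj (hν' : 0 ≤ ν') (hπ : IsPolicy π) (u : X → ℝ) :
    ∑ p, M.occFrom ν' π p * M.Tadj u p = ∑ x, ν' x * u x := by
  rw [sum_mul_Tadj, M.Tflow_occFrom hν' hπ]

section Duality

variable {u : X → ℝ} {c : X × A → ℝ}

theorem sum_mul_le_sum_occFrom_mul_of_Tadj_le (hν' : 0 ≤ ν') (hπ : IsPolicy π)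
    (h : ∀ p, M.Tadj u p ≤ c p) : ∑ x, ν' x * u x ≤ ∑ p, M.occFrom ν' π p * c p := by
  rw [← M.sum_occFrom_mul_Tadj hν' hπ u]
  exact sum_le_sum fun p _ => mul_le_mul_of_nonneg_left (h p) (M.occFrom_nonneg hν' hπ.1 p)

theorem sum_occFrom_mul_eq_of_Tadj_eq (hν' : 0 ≤ ν') (hπ : IsPolicy π)
    (h : ∀ x a, π x a ≠ 0 → M.Tadj u (x, a) = c (x, a)) :
    ∑ p, M.occFrom ν' π p * c p = ∑ x, ν' x * u x := by
  rw [← M.sum_occFrom_mul_Tadj hν' hπ u]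
  refine sum_congr rfl fun ⟨x, a⟩ _ => ?_
  by_cases hxa : π x a = 0
  · simp [M.occFrom_eq_sum_mul hπ.2 x a, hxa]
  · rw [h x a hxa]

theorem le_value_of_Tadj_le [DecidableEq X] (hπ : IsPolicy π) (h : ∀ p, M.Tadj u p ≤ c p)
    (x : X) : u x ≤ M.value c π x := by
  simpa [value] using M.sum_mul_le_sum_occFrom_mul_of_Tadj_le
    (fun y => ite_nonneg zero_le_one le_rfl) hπ h (ν' := fun y => if y = x then 1 else 0)

theorem value_eq_of_Tadj_eq [DecidableEq X] (hπ : IsPolicy π)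
    (h : ∀ x a, π x a ≠ 0 → M.Tadj u (x, a) = c (x, a)) (x : X) : M.value c π x = u x := by
  simpa [value] using M.sum_occFrom_mul_eq_of_Tadj_eq
    (fun y => ite_nonneg zero_le_one le_rfl) hπ h (ν' := fun y => if y = x then 1 else 0)

theorem sum_mul_le_cost_of_Tadj_le (hπ : IsPolicy π) (h : ∀ p, M.Tadj u p ≤ c p) :
    ∑ x, M.ν x * u x ≤ M.cost c π :=
  M.sum_mul_le_sum_occFrom_mul_of_Tadj_le M.ν_nonneg hπ h

theorem cost_eq_of_Tadj_eq (hπ : IsPolicy π) (h : ∀ x a, π x a ≠ 0 → M.Tadj u (x, a) = c (x, a)) :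
    M.cost c π = ∑ x, M.ν x * u x :=
  M.sum_occFrom_mul_eq_of_Tadj_eq M.ν_nonneg hπ h

end Duality

noncomputable def bellmanOpt (c : X × A → ℝ) (v : X → ℝ) (x : X) : ℝ :=
  univ.inf' univ_nonempty fun a => (1 - M.γ) * c (x, a) + M.γ * ∑ y, M.P x a y * v y

theorem sum_P_mul_le_add_dist (x : X) (a : A) (v w : X → ℝ) :
    ∑ y, M.P x a y * v y ≤ ∑ y, M.P x a y * w y + dist v w := by
  have h : ∑ y, M.P x a y * v y ≤ ∑ y, M.P x a y * (w y + dist v w) := by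
    refine sum_le_sum fun y _ => mul_le_mul_of_nonneg_left ?_ (M.P_nonneg x a y)
    have := dist_le_pi_dist v w y
    rw [Real.dist_eq] at this
    linarith [le_abs_self (v y - w y)]
  simpa [mul_add, sum_add_distrib, ← sum_mul, M.P_sum] using h

theorem bellmanOpt_le_add_dist [Nonempty A] (c : X × A → ℝ) (v w : X → ℝ) (x : X) :
    M.bellmanOpt c v x ≤ M.bellmanOpt c w x + M.γ * dist v w := by
  obtain ⟨a, -, ha⟩ := exists_mem_eq_inf' univ_nonempty
    fun a => (1 - M.γ) * c (x, a) + M.γ * ∑ y, M.P x a y * w y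
  calc M.bellmanOpt c v x ≤ (1 - M.γ) * c (x, a) + M.γ * ∑ y, M.P x a y * v y :=
        inf'_le _ (mem_univ a)
    _ ≤ (1 - M.γ) * c (x, a) + M.γ * ∑ y, M.P x a y * w y + M.γ * dist v w := by
        nlinarith [M.sum_P_mul_le_add_dist x a v w, M.γ_pos]
    _ = M.bellmanOpt c w x + M.γ * dist v w := by rw [bellmanOpt, ha]

theorem contractingWith_bellmanOpt [Nonempty A] (c : X × A → ℝ) :
    ContractingWith M.γ.toNNReal (M.bellmanOpt c) := by
  refine ⟨Real.toNNReal_lt_one.2 M.γ_lt_one, LipschitzWith.of_dist_le_mul fun v w => ?_⟩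
  rw [Real.coe_toNNReal _ M.γ_pos.le, dist_pi_le_iff (mul_nonneg M.γ_pos.le dist_nonneg)]
  intro x
  have h := M.bellmanOpt_le_add_dist c w v x
  rw [dist_comm] at h
  rw [Real.dist_eq, abs_sub_le_iff]
  constructor <;> linarith [M.bellmanOpt_le_add_dist c v w x]

theorem exists_isFixedPt_bellmanOpt [Nonempty A] (c : X × A → ℝ) :
    ∃ u, Function.IsFixedPt (M.bellmanOpt c) u :=
  ⟨_, (M.contractingWith_bellmanOpt c).fixedPoint_isFixedPt⟩

theorem sub_Tadj_mul (u : X → ℝ) (c : X × A → ℝ) (x : X) (a : A) :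
    (c (x, a) - M.Tadj u (x, a)) * (1 - M.γ) =
      (1 - M.γ) * c (x, a) + M.γ * ∑ y, M.P x a y * u y - u x := by
  have : 1 - M.γ ≠ 0 := sub_ne_zero.2 M.γ_lt_one.ne'
  unfold Tadj
  field_simp
  ring

section FixedPoint

variable [Nonempty A] {c : X × A → ℝ} {u : X → ℝ} (hu : Function.IsFixedPt (M.bellmanOpt c) u)
include hu

theorem Tadj_le_of_isFixedPt (p : X × A) : M.Tadj u p ≤ c p := by
  obtain ⟨x, a⟩ := p
  have h : u x ≤ (1 - M.γ) * c (x, a) + M.γ * ∑ y, M.P x a y * u y :=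
    (congrFun hu x).symm.trans_le (inf'_le _ (mem_univ a))
  have := M.sub_Tadj_mul u c x a
  nlinarith [M.γ_lt_one]

theorem exists_Tadj_eq_of_isFixedPt (x : X) : ∃ a, M.Tadj u (x, a) = c (x, a) := by
  obtain ⟨a, -, ha⟩ := exists_mem_eq_inf' univ_nonempty
    fun a => (1 - M.γ) * c (x, a) + M.γ * ∑ y, M.P x a y * u y
  refine ⟨a, ?_⟩
  have h := M.sub_Tadj_mul u c x a
  rw [← ha, ← bellmanOpt, hu, sub_self, mul_eq_zero, sub_eq_zero, sub_eq_zero] at h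
  exact h.resolve_right M.γ_lt_one.ne' |>.symm

theorem exists_isPolicy_Tadj_eq_of_isFixedPt :
    ∃ π, IsPolicy π ∧ ∀ x a, π x a ≠ 0 → M.Tadj u (x, a) = c (x, a) := by
  classical
  choose g hg using M.exists_Tadj_eq_of_isFixedPt hu
  refine ⟨fun x => Pi.single (g x) 1, ⟨fun x a => ?_, fun x => by simp⟩, fun x a h => ?_⟩
  · by_cases ha : a = g x <;> simp [ha]
  · by_cases ha : a = g x
    · exact ha ▸ hg x
    · simp [ha] at h

theorem Vstar_eq_of_isFixedPt [DecidableEq X] : M.Vstar c = u := by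
  obtain ⟨π, hπ, hslack⟩ := M.exists_isPolicy_Tadj_eq_of_isFixedPt hu
  funext x
  refine IsLeast.csInf_eq ⟨⟨π, hπ, (M.value_eq_of_Tadj_eq hπ hslack x).symm⟩, ?_⟩
  rintro _ ⟨π', hπ', rfl⟩
  exact M.le_value_of_Tadj_le hπ' (M.Tadj_le_of_isFixedPt hu) x

end FixedPoint

def transitionMatrix (π : X → A → ℝ) : Matrix X X ℝ :=
  fun x y => ∑ a, π x a * M.P x a y

theorem transitionMatrix_mem_rowStochastic [DecidableEq X] (hπ : IsPolicy π) :
    M.transitionMatrix π ∈ Matrix.rowStochastic ℝ X := by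
  refine Matrix.mem_rowStochastic_iff_sum.2
    ⟨fun x y => sum_nonneg fun a _ => mul_nonneg (hπ.1 x a) (M.P_nonneg x a y), fun x => ?_⟩
  simp only [transitionMatrix]
  rw [sum_comm]
  simp [← mul_sum, M.P_sum, hπ.2]

theorem smul_Tflow_mul_policy (hπ : ∀ x, ∑ a, π x a = 1) (d : X → ℝ) :
    (1 - M.γ) • M.Tflow (fun p => d p.1 * π p.1 p.2) =
      d - M.γ • (d ᵥ* M.transitionMatrix π) := by
  have : 1 - M.γ ≠ 0 := sub_ne_zero.2 M.γ_lt_one.ne'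
  funext x
  simp only [Tflow, Pi.smul_apply, Pi.sub_apply, smul_eq_mul, Matrix.vecMul, dotProduct,
    transitionMatrix, ← mul_sum, hπ, mul_one, Fintype.sum_prod_type]
  field_simp
  simp only [mul_sum, mul_assoc]

theorem eq_of_Tflow_mul_policy_eq [DecidableEq X] (hπ : IsPolicy π) {d d' : X → ℝ}
    (h : M.Tflow (fun p => d p.1 * π p.1 p.2) = M.Tflow (fun p => d' p.1 * π p.1 p.2)) :
    d = d' := by
  have h' := congrArg ((1 - M.γ) • ·) h
  simp only [M.smul_Tflow_mul_policy hπ.2] at h'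
  rw [sub_eq_sub_iff_sub_eq_sub] at h'
  refine sub_eq_zero.1 <| eq_zero_of_eq_smul_vecMul (M.transitionMatrix_mem_rowStochastic hπ)
    (abs_lt.2 ⟨by linarith [M.γ_pos], by simpa [abs_of_pos M.γ_pos] using M.γ_lt_one⟩) ?_
  rwa [Matrix.sub_vecMul, smul_sub]

theorem isLinearMap_Tflow : IsLinearMap ℝ M.Tflow := by
  constructor
  · intro μ μ'
    funext x
    simp only [Tflow, Pi.add_apply, sum_add_distrib, add_mul]
    ring
  · intro a μ
    funext x
    simp only [Tflow, Pi.smul_apply, smul_eq_mul, ← mul_sum, mul_assoc]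
    ring

theorem sum_eq_sum_Tflow (μ : X × A → ℝ) : ∑ p, μ p = ∑ x, M.Tflow μ x := by
  have h1 : ∀ p, M.Tadj (fun _ => 1) p = 1 := fun p => by
    have : 1 - M.γ ≠ 0 := sub_ne_zero.2 M.γ_lt_one.ne'
    simp only [Tadj, mul_one, M.P_sum]
    field_simp
  simpa [h1] using M.sum_mul_Tadj μ (fun _ => 1)

def flowPolytope : Set (X × A → ℝ) :=
  {μ | 0 ≤ μ ∧ M.Tflow μ = M.ν}

theorem occ_mem_flowPolytope (hπ : IsPolicy π) : M.occ π ∈ M.flowPolytope :=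
  ⟨M.occFrom_nonneg M.ν_nonneg hπ.1, M.Tflow_occFrom M.ν_nonneg hπ⟩

theorem convex_flowPolytope : Convex ℝ M.flowPolytope :=
  (convex_Ici 0).inter ((convex_singleton M.ν).is_linear_preimage M.isLinearMap_Tflow)

theorem isCompact_flowPolytope : IsCompact M.flowPolytope := by
  have hcont : Continuous M.Tflow :=
    (IsLinearMap.mk' _ M.isLinearMap_Tflow).continuous_of_finiteDimensional
  refine (isCompact_Icc (a := 0) (b := 1)).of_isClosed_subset
    (isClosed_Ici.inter (isClosed_eq hcont continuous_const)) fun μ hμ => ⟨hμ.1, fun p => ?_⟩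
  calc μ p ≤ ∑ q, μ q := single_le_sum (fun q _ => hμ.1 q) (mem_univ p)
    _ = 1 := by rw [M.sum_eq_sum_Tflow, hμ.2, M.ν_sum]

theorem occ_inducedPolicy [DecidableEq X] [Nonempty A] {μ : X × A → ℝ}
    (hμ : μ ∈ M.flowPolytope) : M.occ (inducedPolicy μ) = μ := by
  set π := inducedPolicy μ
  have hπ : IsPolicy π := inducedPolicy_isPolicy hμ.1
  have hμπ : μ = fun p => (∑ b, μ (p.1, b)) * π p.1 p.2 :=
    funext fun p => (sum_mul_inducedPolicy hμ.1 p.1 p.2).symm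
  have hocc : M.occ π = fun p => (∑ b, M.occ π (p.1, b)) * π p.1 p.2 :=
    funext fun p => M.occFrom_eq_sum_mul hπ.2 p.1 p.2
  have hd : (fun x => ∑ b, M.occ π (x, b)) = fun x => ∑ b, μ (x, b) :=
    M.eq_of_Tflow_mul_policy_eq hπ <| by
      rw [← hocc, ← hμπ, (M.occ_mem_flowPolytope hπ).2, hμ.2]
  funext ⟨x, a⟩
  rw [congrFun hocc (x, a), congrFun hd x]
  exact sum_mul_inducedPolicy hμ.1 x a

section Minimax

variable {nc : ℕ} (c : Fin nc → X × A → ℝ) (πE : X → A → ℝ)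

noncomputable def weightedGap (μ : X × A → ℝ) (w : Fin nc → ℝ) : ℝ :=
  ∑ i, w i * (∑ p, μ p * c i p - M.cost (c i) πE)

theorem weightedGap_add_smul_left (μ μ' : X × A → ℝ) (w : Fin nc → ℝ) {a b : ℝ}
    (hab : a + b = 1) :
    M.weightedGap c πE (a • μ + b • μ') w =
      a * M.weightedGap c πE μ w + b * M.weightedGap c πE μ' w := by
  have h : ∀ i, ∑ p, (a • μ + b • μ') p * c i p =
      a * ∑ p, μ p * c i p + b * ∑ p, μ' p * c i p := fun i => by
    simp only [Pi.add_apply, Pi.smul_apply, smul_eq_mul, add_mul, sum_add_distrib, mul_sum,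
      mul_assoc]
  simp only [weightedGap, h]
  rw [mul_sum, mul_sum, ← sum_add_distrib]
  exact sum_congr rfl fun i _ => by linear_combination (w i * M.cost (c i) πE) * hab

theorem weightedGap_add_smul_right (μ : X × A → ℝ) (w w' : Fin nc → ℝ) (a b : ℝ) :
    M.weightedGap c πE μ (a • w + b • w') =
      a * M.weightedGap c πE μ w + b * M.weightedGap c πE μ w' := by
  simp only [weightedGap, Pi.add_apply, Pi.smul_apply, smul_eq_mul, add_mul, sum_add_distrib,
    mul_assoc, mul_sum]

theorem continuous_weightedGap_left (w : Fin nc → ℝ) :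
    Continuous fun μ => M.weightedGap c πE μ w := by
  unfold weightedGap
  fun_prop

theorem continuous_weightedGap_right (μ : X × A → ℝ) :
    Continuous fun w => M.weightedGap c πE μ w := by
  unfold weightedGap
  fun_prop

variable {c πE}

theorem exists_mem_stdSimplex_gapMax_le [DecidableEq X] [Nonempty A] [NeZero nc]
    {πA : X → A → ℝ} (hA : IsApprentice M c πE πA) :
    ∃ w ∈ stdSimplex ℝ (Fin nc), ∀ π, IsPolicy π →
      gapMax M c πE πA ≤ ∑ i, w i * (M.cost (c i) π - M.cost (c i) πE) := by
  obtain ⟨μ, hμ, w, hw, hsaddle⟩ := Sion.exists_isSaddlePointOn (f := M.weightedGap c πE)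
    ⟨_, M.occ_mem_flowPolytope hA.1⟩ M.convex_flowPolytope M.isCompact_flowPolytope
    (fun w _ => (M.continuous_weightedGap_left c πE w).lowerSemicontinuous.lowerSemicontinuousOn _)
    (fun w _ => (quasilinearOn_of_map_add_smul M.convex_flowPolytope
      fun μ μ' _ _ => M.weightedGap_add_smul_left c πE μ μ' w).1)
    (convex_stdSimplex ℝ _) ⟨_, single_mem_stdSimplex ℝ 0⟩ (isCompact_stdSimplex ℝ _)
    (fun μ _ =>
      (M.continuous_weightedGap_right c πE μ).upperSemicontinuous.upperSemicontinuousOn _)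
    (fun μ _ => (quasilinearOn_of_map_add_smul (convex_stdSimplex ℝ _)
      fun w w' a b _ => M.weightedGap_add_smul_right c πE μ w w' a b).2)
  refine ⟨w, hw, fun π hπ => ?_⟩
  calc gapMax M c πE πA ≤ gapMax M c πE (inducedPolicy μ) :=
        hA.2 _ (inducedPolicy_isPolicy hμ.1)
    _ ≤ M.weightedGap c πE (M.occ π) w := sup'_le _ _ fun i _ => by
        simpa [weightedGap, cost, M.occ_inducedPolicy hμ, Pi.single_apply] using
          hsaddle _ (M.occ_mem_flowPolytope hπ) _ (single_mem_stdSimplex ℝ i)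
    _ = ∑ i, w i * (M.cost (c i) π - M.cost (c i) πE) := rfl

end Minimax

section DualLP

variable {nc : ℕ} {c : Fin nc → X × A → ℝ} {πE : X → A → ℝ}

theorem cost_costW (w : Fin nc → ℝ) (π : X → A → ℝ) :
    M.cost (costW c w) π = ∑ i, w i * M.cost (c i) π := by
  simp only [cost, costW, mul_sum]
  rw [sum_comm]
  exact sum_congr rfl fun i _ => sum_congr rfl fun p _ => by ring

theorem cost_costW_sub_le_gapMax [NeZero nc] (c : Fin nc → X × A → ℝ) (πE : X → A → ℝ)
    {w : Fin nc → ℝ} (hw : simplexPt w) (π : X → A → ℝ) :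
    M.cost (costW c w) π - M.cost (costW c w) πE ≤ gapMax M c πE π := by
  rw [M.cost_costW, M.cost_costW, ← sum_sub_distrib]
  calc ∑ i, (w i * M.cost (c i) π - w i * M.cost (c i) πE)
      ≤ ∑ i, w i * gapMax M c πE π := sum_le_sum fun i _ => by
        rw [← mul_sub]
        exact mul_le_mul_of_nonneg_left (le_sup' (fun i => M.cost (c i) π - M.cost (c i) πE)
          (mem_univ i)) (hw.1 i)
    _ = gapMax M c πE π := by rw [← sum_mul, hw.2, one_mul]

theorem dualObj_eq_sum_sub_cost (hπE : IsPolicy πE) (u : X → ℝ) (w : Fin nc → ℝ) :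
    dualObj M c πE u w = ∑ x, M.ν x * u x - M.cost (costW c w) πE := by
  simp only [dualObj, occ, mul_sub, sum_sub_distrib]
  rw [M.sum_occFrom_mul_Tadj M.ν_nonneg hπE]
  rfl

theorem dualObj_le_cost_sub (hπE : IsPolicy πE) {u : X → ℝ} {w : Fin nc → ℝ}
    (hfeas : dualFeasible M c u w) (hπ : IsPolicy π) :
    dualObj M c πE u w ≤ M.cost (costW c w) π - M.cost (costW c w) πE := by
  rw [M.dualObj_eq_sum_sub_cost hπE]
  linarith [M.sum_mul_le_cost_of_Tadj_le hπ fun p => sub_nonneg.1 (hfeas.2 p)]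

theorem dualFeasible_of_isFixedPt [Nonempty A] {u : X → ℝ} {w : Fin nc → ℝ} (hw : simplexPt w)
    (hu : Function.IsFixedPt (M.bellmanOpt (costW c w)) u) : dualFeasible M c u w :=
  ⟨hw, fun p => sub_nonneg.2 (M.Tadj_le_of_isFixedPt hu p)⟩

variable [DecidableEq X] [Nonempty A] (hπE : IsPolicy πE) {uA : X → ℝ} {wA : Fin nc → ℝ}
  (hdual : dualOptimal M c πE uA wA)
include hπE hdual

theorem gapMax_le_dualObj [NeZero nc] {πA : X → A → ℝ} (hA : IsApprentice M c πE πA) :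
    gapMax M c πE πA ≤ dualObj M c πE uA wA := by
  obtain ⟨w, hw, hgap⟩ := M.exists_mem_stdSimplex_gapMax_le hA
  obtain ⟨u, hu⟩ := M.exists_isFixedPt_bellmanOpt (costW c w)
  obtain ⟨π, hπ, hslack⟩ := M.exists_isPolicy_Tadj_eq_of_isFixedPt hu
  calc gapMax M c πE πA ≤ ∑ i, w i * (M.cost (c i) π - M.cost (c i) πE) := hgap π hπ
    _ = dualObj M c πE u w := by
        rw [M.dualObj_eq_sum_sub_cost hπE, ← M.cost_eq_of_Tadj_eq hπ hslack, M.cost_costW,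
          M.cost_costW, ← sum_sub_distrib]
        simp only [mul_sub]
    _ ≤ dualObj M c πE uA wA := hdual.2 u w (M.dualFeasible_of_isFixedPt hw hu)

theorem eq_Vstar_of_dualOptimal (hν : ∀ x, 0 < M.ν x) : uA = M.Vstar (costW c wA) := by
  obtain ⟨u, hu⟩ := M.exists_isFixedPt_bellmanOpt (costW c wA)
  obtain ⟨π, hπ, hslack⟩ := M.exists_isPolicy_Tadj_eq_of_isFixedPt hu
  have hle : ∀ x, uA x ≤ u x := fun x => M.value_eq_of_Tadj_eq hπ hslack x ▸
    M.le_value_of_Tadj_le hπ (fun p => sub_nonneg.1 (hdual.1.2 p)) x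
  have hsum : ∑ x, M.ν x * u x ≤ ∑ x, M.ν x * uA x := by
    have := hdual.2 u wA (M.dualFeasible_of_isFixedPt hdual.1.1 hu)
    rwa [M.dualObj_eq_sum_sub_cost hπE, M.dualObj_eq_sum_sub_cost hπE,
      sub_le_sub_iff_right] at this
  rw [M.Vstar_eq_of_isFixedPt hu]
  funext x
  by_contra hne
  exact (sum_lt_sum (fun y _ => mul_le_mul_of_nonneg_left (hle y) (hν y).le)
    ⟨x, mem_univ x, mul_lt_mul_of_pos_left ((hle x).lt_of_ne hne) (hν x)⟩).not_ge hsum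

end DualLP

end FinMDP

end

/-- (Suboptimal expert.) If `(u_A, w_A)` is optimal for the dual LP of
the LfD problem, then any apprentice policy `π_A` is optimal for the forward RL
problem with cost `c_{w_A}`, and `u_A = V*_{w_A}` (here `ν₀` has full support). -/
theorem dual_optimality_suboptimal_expert (M : FinMDP X A) {nc : ℕ} [NeZero nc]
    (hν : ∀ x, 0 < M.ν x)
    (c : Fin nc → X × A → ℝ)
    (πE : X → A → ℝ) (hπE : FinMDP.IsPolicy πE)
    (uA : X → ℝ) (wA : Fin nc → ℝ)
    (hdual : dualOptimal M c πE uA wA)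
    (πA : X → A → ℝ) (hA : IsApprentice M c πE πA) :
    M.IsOptimal (costW c wA) πA ∧ uA = M.Vstar (costW c wA) := by
  refine ⟨⟨hA.1, fun π hπ => ?_⟩, M.eq_Vstar_of_dualOptimal hπE hdual hν⟩
  linarith [M.cost_costW_sub_le_gapMax c πE hdual.1.1 πA, M.gapMax_le_dualObj hπE hdual hA,
    M.dualObj_le_cost_sub hπE hdual.1 hπ]
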